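/- arXiv:2312.10684 — 3 statements merged into one kernel-verified Lean document; each statement's English description precedes it below -/
import Mathlib

section
/- (Theorem 1, single-output immersion) Let A ∈ ℝ^{n×n}, B ∈ ℝ^{n×p}, C ∈ ℝ^{n×n} symmetric, d ∈ ℝ^n, let u : ℝ → ℝ^p be a function, and let x : ℝ → ℝ^n be differentiable with ẋ(t) = A x(t) + B u(t) for all t ∈ ℝ; set y(t) := ½ x(t)ᵀ C x(t) + dᵀ x(t). Suppose m ≥ 1 and α_0, …, α_{m-1} ∈ ℝ satisfy L_A^{[m]}(C) = Σ_{k=0}^{m-1} α_k L_A^{[k]}(C). Define ξ_k(t) := ½ x(t)ᵀ L_A^{[k]}(C) x(t) and z(t) := (ξ_{m-1}(t), ξ_{m-2}(t), …, ξ_0(t), x(t)) ∈ ℝ^{m+n}. For v ∈ ℝ^p define 𝒜(v) ∈ ℝ^{(m+n)×(m+n)} blockwise by: the top-left m×m block has first row (α_{m-1}, α_{m-2}, …, α_0), ones on the subdiagonal, and zeros elsewhere; the j-th row (j = 1, …, m) of the top-right m×n block is (Bv)ᵀ L_A^{[m-j]}(C); the bottom-left n×m block is zero; the bottom-right n×n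 block is A. Define ℬ := [0_{m×p}; B] ∈ ℝ^{(m+n)×p} and 𝒞 := (0, …, 0, 1, dᵀ) ∈ ℝ^{1×(m+n)}. Then z is differentiable with ż(t) = 𝒜(u(t)) z(t) + ℬ u(t) and y(t) = 𝒞 z(t) for all t ∈ ℝ. -/
/-! Along `ẋ = A x + B u`, for symmetric `P` one has
`d/dt (½ xᵀ P x) = ½ xᵀ L_A(P) x + (B u)ᵀ P x`, so each `ξ_k` is driven by `ξ_{k+1}` plus a term
linear in `x`. The relation `L_A^[m](C) = ∑ α_k L_A^[k](C)` closes this chain: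
`ξ_m = ∑ α_k ξ_k`, which is the companion first row of `𝒜`. The output is `y = ξ_0 + dᵀ x`. -/

open Matrix
open scoped Kronecker

namespace Quad

/-- Index set for the lower-triangular entries (pairs `(i,j)` with `j ≤ i`). -/
abbrev SymIdx (n : ℕ) := {p : Fin n × Fin n // p.2 ≤ p.1}

/-- Vectorization of a matrix (stacking columns): `vec M (j, i) = M i j`. -/
def vec {n m : ℕ} (M : Matrix (Fin n) (Fin m) ℝ) : Fin m × Fin n → ℝ :=
  fun p => M p.2 p.1

/-- Half-vectorization of a (symmetric) matrix. -/
def vech {n : ℕ} (M : Matrix (Fin n) (Fin n) ℝ) : SymIdx n → ℝ :=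
  fun p => M p.1.1 p.1.2

/-- The duplication matrix `D_n`. -/
def dup (n : ℕ) : Matrix (Fin n × Fin n) (SymIdx n) ℝ :=
  Matrix.of fun r c => if r = c.1 ∨ r = (c.1.2, c.1.1) then 1 else 0

/-- The Moore–Penrose inverse `D_n⁺ = (D_nᵀ D_n)⁻¹ D_nᵀ`. -/
noncomputable def dupPinv (n : ℕ) : Matrix (SymIdx n) (Fin n × Fin n) ℝ :=
  ((dup n)ᵀ * dup n)⁻¹ * (dup n)ᵀ

/-- Kronecker sum `A ⊕ B = A ⊗ I + I ⊗ B`. -/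
def kronSum {n m : ℕ} (A : Matrix (Fin n) (Fin n) ℝ) (B : Matrix (Fin m) (Fin m) ℝ) :
    Matrix (Fin n × Fin m) (Fin n × Fin m) ℝ :=
  A ⊗ₖ (1 : Matrix (Fin m) (Fin m) ℝ) + (1 : Matrix (Fin n) (Fin n) ℝ) ⊗ₖ B

/-- Kronecker product of two (column) vectors. -/
def kronVec {a b : ℕ} (u : Fin a → ℝ) (v : Fin b → ℝ) : Fin a × Fin b → ℝ :=
  fun p => u p.1 * v p.2

/-- The Lyapunov operator `L_A(X) = X A + Aᵀ X`. -/
def lyap {n : ℕ} (A X : Matrix (Fin n) (Fin n) ℝ) : Matrix (Fin n) (Fin n) ℝ :=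
  X * A + Aᵀ * X

/-- `w ⊗ I_n` for a column vector `w ∈ ℝⁿ`, an `n² × n` matrix. -/
def vecKronId {n : ℕ} (w : Fin n → ℝ) : Matrix (Fin n × Fin n) (Fin n) ℝ :=
  Matrix.of fun pr j => w pr.1 * (if pr.2 = j then 1 else 0)

/-- `I_n ⊗ w` for a column vector `w ∈ ℝⁿ`, an `n² × n` matrix. -/
def idKronVec {n : ℕ} (w : Fin n → ℝ) : Matrix (Fin n × Fin n) (Fin n) ℝ :=
  Matrix.of fun pr j => (if pr.1 = j then 1 else 0) * w pr.2

/-- `Ā := D_nᵀ (A ⊕ A) (D_n⁺)ᵀ`. -/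
noncomputable def kronAbar {n : ℕ} (A : Matrix (Fin n) (Fin n) ℝ) :
    Matrix (SymIdx n) (SymIdx n) ℝ :=
  (dup n)ᵀ * kronSum A A * (dupPinv n)ᵀ

/-- `P` is a permutation matrix. -/
def IsPermMatrix {s : ℕ} (P : Matrix (Fin s) (Fin s) ℝ) : Prop :=
  ∃ σ : Equiv.Perm (Fin s), ∀ i j, P i j = if i = σ j then 1 else 0

/-- Identification of `Fin b ⊕ Fin (a - b)` with `Fin a` used for vertical stacking. -/
def stackEquiv {a b : ℕ} (h : b ≤ a) : Fin b ⊕ Fin (a - b) ≃ Fin a :=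
  finSumFinEquiv.trans (finCongr (Nat.add_sub_cancel' h))

theorem _root_.HasDerivAt.dotProduct {ι : Type*} [Fintype ι] {f g : ℝ → ι → ℝ}
    {f' g' : ι → ℝ} {t : ℝ} (hf : HasDerivAt f f' t) (hg : HasDerivAt g g' t) :
    HasDerivAt (fun s => f s ⬝ᵥ g s) (f' ⬝ᵥ g t + f t ⬝ᵥ g') t :=
  (HasDerivAt.fun_sum fun i _ =>
    (hasDerivAt_pi.1 hf i).mul (hasDerivAt_pi.1 hg i)).congr_deriv Finset.sum_add_distrib

theorem _root_.HasDerivAt.mulVec {ι κ : Type*} [Fintype κ] (P : Matrix ι κ ℝ)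
    {f : ℝ → κ → ℝ} {f' : κ → ℝ} {t : ℝ} (hf : HasDerivAt f f' t) :
    HasDerivAt (fun s => P *ᵥ f s) (P *ᵥ f') t :=
  hasDerivAt_pi.2 fun i =>
    ((hasDerivAt_const t (P i)).dotProduct hf).congr_deriv (by rw [zero_dotProduct, zero_add]; rfl)

theorem isSymm_iterate_lyap {n : ℕ} (A : Matrix (Fin n) (Fin n) ℝ) {C : Matrix (Fin n) (Fin n) ℝ}
    (hC : C.IsSymm) (k : ℕ) : ((lyap A)^[k] C).IsSymm := by
  induction k with
  | zero => exact hC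
  | succ k ih =>
    rw [Function.iterate_succ_apply']
    simp only [lyap, IsSymm, transpose_add, transpose_mul, transpose_transpose, ih.eq, add_comm]

theorem dotProduct_lyap_mulVec {n : ℕ} (A : Matrix (Fin n) (Fin n) ℝ)
    {P : Matrix (Fin n) (Fin n) ℝ} (hP : P.IsSymm) (v : Fin n → ℝ) :
    v ⬝ᵥ lyap A P *ᵥ v = 2 * (A *ᵥ v ⬝ᵥ P *ᵥ v) := by
  have hPA : v ⬝ᵥ (P * A) *ᵥ v = A *ᵥ v ⬝ᵥ P *ᵥ v := by
    rw [← mulVec_mulVec, dotProduct_comm, dotProduct_mulVec, ← mulVec_transpose, hP.eq]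
  have hAP : v ⬝ᵥ (Aᵀ * P) *ᵥ v = A *ᵥ v ⬝ᵥ P *ᵥ v := by
    rw [← mulVec_mulVec, dotProduct_mulVec, vecMul_transpose]
  rw [lyap, add_mulVec, dotProduct_add, hPA, hAP]
  ring

theorem hasDerivAt_half_quadForm {n : ℕ} (A : Matrix (Fin n) (Fin n) ℝ)
    {P : Matrix (Fin n) (Fin n) ℝ} (hP : P.IsSymm) {x : ℝ → Fin n → ℝ} {w : Fin n → ℝ} {t : ℝ}
    (hx : HasDerivAt x (A *ᵥ x t + w) t) :
    HasDerivAt (fun s => (1 / 2 : ℝ) * (x s ⬝ᵥ P *ᵥ x s))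
      ((1 / 2 : ℝ) * (x t ⬝ᵥ lyap A P *ᵥ x t) + w ⬝ᵥ P *ᵥ x t) t := by
  refine ((hx.dotProduct (hx.mulVec P)).const_mul (1 / 2 : ℝ)).congr_deriv ?_
  have hswap : x t ⬝ᵥ P *ᵥ (A *ᵥ x t + w) = (A *ᵥ x t + w) ⬝ᵥ P *ᵥ x t := by
    rw [dotProduct_mulVec, ← mulVec_transpose, hP.eq, dotProduct_comm]
  rw [hswap, dotProduct_lyap_mulVec A hP, add_dotProduct]
  ring

def companion {R : Type*} [Zero R] [One R] (m : ℕ) (α : ℕ → R) : Matrix (Fin m) (Fin m) R :=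
  Matrix.of fun i j : Fin m =>
    if (i : ℕ) = 0 then α (m - 1 - (j : ℕ)) else if (i : ℕ) = (j : ℕ) + 1 then 1 else 0

theorem companion_mulVec_reverse {R : Type*} [Semiring R] {m : ℕ} {α f : ℕ → R}
    (hf : f m = ∑ k ∈ Finset.range m, α k * f k) (i : Fin m) :
    (companion m α *ᵥ fun j : Fin m => f (m - 1 - j)) i = f (m - i) := by
  simp only [mulVec, dotProduct, companion, of_apply]
  rcases i with ⟨_ | i, hi⟩
  · simp only [if_true, Nat.sub_zero, hf,
      Fin.sum_univ_eq_sum_range (fun j => α (m - 1 - j) * f (m - 1 - j))]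
    exact Finset.sum_range_reflect (fun k => α k * f k) m
  · rw [Finset.sum_eq_single ⟨i, by omega⟩]
    · simp only [Nat.add_one_ne_zero, if_false, if_true, one_mul]
      congr 1
      omega
    · intro j _ hj
      have hij : i ≠ (j : ℕ) := fun h => hj (Fin.ext h.symm)
      simp [hij]
    · simp

theorem hasDerivAt_lyap_quadForms {n m : ℕ} (A : Matrix (Fin n) (Fin n) ℝ)
    {C : Matrix (Fin n) (Fin n) ℝ} (hC : C.IsSymm) {α : ℕ → ℝ}
    (hα : (lyap A)^[m] C = ∑ k ∈ Finset.range m, α k • (lyap A)^[k] C)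
    {x : ℝ → Fin n → ℝ} {w : Fin n → ℝ} {t : ℝ} (hx : HasDerivAt x (A *ᵥ x t + w) t) :
    HasDerivAt (fun s (j : Fin m) => (1 / 2 : ℝ) * (x s ⬝ᵥ (lyap A)^[m - 1 - j] C *ᵥ x s))
      (companion m α *ᵥ (fun j : Fin m => (1 / 2 : ℝ) * (x t ⬝ᵥ (lyap A)^[m - 1 - j] C *ᵥ x t)) +
        (of fun (i : Fin m) j => (w ᵥ* (lyap A)^[m - 1 - i] C) j) *ᵥ x t) t := by
  have hrec : (1 / 2 : ℝ) * (x t ⬝ᵥ (lyap A)^[m] C *ᵥ x t) =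
      ∑ k ∈ Finset.range m, α k * ((1 / 2 : ℝ) * (x t ⬝ᵥ (lyap A)^[k] C *ᵥ x t)) := by
    simp only [hα, sum_mulVec, smul_mulVec, dotProduct_sum, dotProduct_smul, smul_eq_mul,
      Finset.mul_sum]
    ring_nf
  refine hasDerivAt_pi.2 fun i =>
    (hasDerivAt_half_quadForm A (isSymm_iterate_lyap A hC _) hx).congr_deriv ?_
  rw [Pi.add_apply,
    companion_mulVec_reverse (f := fun k => (1 / 2 : ℝ) * (x t ⬝ᵥ (lyap A)^[k] C *ᵥ x t)) hrec i,
    ← Function.iterate_succ_apply' (lyap A), show (m - 1 - (i : ℕ)).succ = m - i by omega,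
    dotProduct_mulVec w]
  rfl

/-- Theorem 1, single-output immersion. -/
theorem single_output_immersion {n p m : ℕ} (hm : 1 ≤ m)
    (A : Matrix (Fin n) (Fin n) ℝ) (B : Matrix (Fin n) (Fin p) ℝ)
    (C : Matrix (Fin n) (Fin n) ℝ) (hC : C.IsSymm) (d : Fin n → ℝ)
    (u : ℝ → Fin p → ℝ) (x : ℝ → Fin n → ℝ)
    (hx : ∀ t, HasDerivAt x (A.mulVec (x t) + B.mulVec (u t)) t)
    (y : ℝ → ℝ)
    (hy : ∀ t, y t = (1 / 2 : ℝ) * (x t ⬝ᵥ C.mulVec (x t)) + d ⬝ᵥ x t)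
    (α : ℕ → ℝ)
    (hα : (lyap A)^[m] C = ∑ k ∈ Finset.range m, α k • (lyap A)^[k] C)
    (ξ : ℕ → ℝ → ℝ)
    (hξ : ∀ k t, ξ k t = (1 / 2 : ℝ) * (x t ⬝ᵥ ((lyap A)^[k] C).mulVec (x t)))
    (z : ℝ → Fin m ⊕ Fin n → ℝ)
    (hz : ∀ t, z t = Sum.elim (fun j : Fin m => ξ (m - 1 - (j : ℕ)) t) (x t))
    (𝒜 : (Fin p → ℝ) → Matrix (Fin m ⊕ Fin n) (Fin m ⊕ Fin n) ℝ)
    (h𝒜 : ∀ v, 𝒜 v = Matrix.fromBlocks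
      (Matrix.of fun i j : Fin m =>
        if (i : ℕ) = 0 then α (m - 1 - (j : ℕ))
        else if (i : ℕ) = (j : ℕ) + 1 then 1 else 0)
      (Matrix.of fun (i : Fin m) (j : Fin n) =>
        Matrix.vecMul (B.mulVec v) ((lyap A)^[m - 1 - (i : ℕ)] C) j)
      (0 : Matrix (Fin n) (Fin m) ℝ) A)
    (ℬ : Matrix (Fin m ⊕ Fin n) (Fin p) ℝ)
    (hℬ : ℬ = Matrix.fromRows (0 : Matrix (Fin m) (Fin p) ℝ) B)
    (𝒞 : Fin m ⊕ Fin n → ℝ)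
    (h𝒞 : 𝒞 = Sum.elim (fun j : Fin m => if (j : ℕ) = m - 1 then (1 : ℝ) else 0) d) :
    ∀ t : ℝ, HasDerivAt z ((𝒜 (u t)).mulVec (z t) + ℬ.mulVec (u t)) t ∧
      y t = 𝒞 ⬝ᵥ z t := by
  intro t
  obtain rfl : z = fun t => Sum.elim (fun j : Fin m => ξ (m - 1 - (j : ℕ)) t) (x t) := funext hz
  obtain rfl : ξ = fun k t => (1 / 2 : ℝ) * (x t ⬝ᵥ ((lyap A)^[k] C).mulVec (x t)) :=
    funext fun k => funext (hξ k)
  subst hℬ h𝒞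
  refine ⟨hasDerivAt_pi.2 ?_, ?_⟩
  · rw [h𝒜, fromBlocks_mulVec, fromRows_mulVec]
    rintro (i | i)
    · simp only [Pi.add_apply, Sum.elim_inl, Sum.elim_comp_inl, Sum.elim_comp_inr, zero_mulVec,
        Pi.zero_apply, add_zero]
      exact hasDerivAt_pi.1 (hasDerivAt_lyap_quadForms A hC hα (hx t)) i
    · simpa using hasDerivAt_pi.1 (hx t) i
  · have hlast : (fun j : Fin m => if (j : ℕ) = m - 1 then (1 : ℝ) else 0) =
        Pi.single ⟨m - 1, by omega⟩ 1 := by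
      funext j
      simp [Pi.single_apply, Fin.ext_iff]
    rw [hy, sumElim_dotProduct_sumElim, hlast, single_one_dotProduct]
    simp

end Quad
end

section
/- Let A ∈ ℝ^{n×n}, B ∈ ℝ^{n×p}, let u : ℝ → ℝ^p be a function, and let x : ℝ → ℝ^n be differentiable with ẋ(t) = A x(t) + B u(t) for all t ∈ ℝ. Then t ↦ x(t) ⊗ x(t) is differentiable and, for every t, d/dt (x(t) ⊗ x(t)) = (A ⊕ A)(x(t) ⊗ x(t)) + ((B u(t)) ⊗ I_n + I_n ⊗ (B u(t))) x(t). -/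
open Matrix
open scoped Kronecker

namespace Quad

theorem kronVec_add_left {a b : ℕ} (u u' : Fin a → ℝ) (v : Fin b → ℝ) :
    kronVec (u + u') v = kronVec u v + kronVec u' v := by
  ext; simp only [kronVec, Pi.add_apply, add_mul]

theorem kronVec_add_right {a b : ℕ} (u : Fin a → ℝ) (v v' : Fin b → ℝ) :
    kronVec u (v + v') = kronVec u v + kronVec u v' := by
  ext; simp only [kronVec, Pi.add_apply, mul_add]

theorem kronecker_mulVec_kronVec {a b c d : ℕ} (M : Matrix (Fin a) (Fin b) ℝ)
    (N : Matrix (Fin c) (Fin d) ℝ) (u : Fin b → ℝ) (v : Fin d → ℝ) :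
    (M ⊗ₖ N) *ᵥ kronVec u v = kronVec (M *ᵥ u) (N *ᵥ v) := by
  ext ⟨i, j⟩
  simp only [kronVec, mulVec, dotProduct, kroneckerMap_apply, Fintype.sum_prod_type,
    Finset.sum_mul_sum]
  exact Finset.sum_congr rfl fun k _ => Finset.sum_congr rfl fun l _ => by ring

theorem kronSum_mulVec_kronVec {a b : ℕ} (A : Matrix (Fin a) (Fin a) ℝ)
    (B : Matrix (Fin b) (Fin b) ℝ) (u : Fin a → ℝ) (v : Fin b → ℝ) :
    kronSum A B *ᵥ kronVec u v = kronVec (A *ᵥ u) v + kronVec u (B *ᵥ v) := by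
  rw [kronSum, add_mulVec, kronecker_mulVec_kronVec, kronecker_mulVec_kronVec, one_mulVec,
    one_mulVec]

theorem vecKronId_mulVec {n : ℕ} (w v : Fin n → ℝ) : vecKronId w *ᵥ v = kronVec w v := by
  ext ⟨i, j⟩
  simp [vecKronId, kronVec, mulVec, dotProduct]

theorem idKronVec_mulVec {n : ℕ} (w v : Fin n → ℝ) : idKronVec w *ᵥ v = kronVec v w := by
  ext ⟨i, j⟩
  simp [idKronVec, kronVec, mulVec, dotProduct, mul_comm]

theorem _root_.HasDerivAt.kronVec {a b : ℕ} {u : ℝ → Fin a → ℝ} {v : ℝ → Fin b → ℝ}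
    {u' : Fin a → ℝ} {v' : Fin b → ℝ} {t : ℝ} (hu : HasDerivAt u u' t)
    (hv : HasDerivAt v v' t) :
    HasDerivAt (fun s => Quad.kronVec (u s) (v s))
      (Quad.kronVec u' (v t) + Quad.kronVec (u t) v') t :=
  hasDerivAt_pi.mpr fun ij =>
    (hasDerivAt_pi.mp hu ij.1).mul (hasDerivAt_pi.mp hv ij.2)

/-- along `ẋ = Ax + Bu`,
`d/dt (x ⊗ x) = (A ⊕ A)(x ⊗ x) + ((Bu) ⊗ I_n + I_n ⊗ (Bu)) x`. -/
theorem hasDerivAt_kron_self {n p : ℕ}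
    (A : Matrix (Fin n) (Fin n) ℝ) (B : Matrix (Fin n) (Fin p) ℝ)
    (u : ℝ → Fin p → ℝ) (x : ℝ → Fin n → ℝ)
    (hx : ∀ t, HasDerivAt x (A.mulVec (x t) + B.mulVec (u t)) t) :
    ∀ t : ℝ, HasDerivAt (fun s => kronVec (x s) (x s))
      ((kronSum A A).mulVec (kronVec (x t) (x t)) +
        (vecKronId (B.mulVec (u t)) + idKronVec (B.mulVec (u t))).mulVec (x t)) t := by
  intro t
  convert (hx t).kronVec (hx t) using 1
  rw [kronSum_mulVec_kronVec, add_mulVec, vecKronId_mulVec, idKronVec_mulVec,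
    kronVec_add_left, kronVec_add_right]
  abel

end Quad
end

section
/- Let A ∈ ℝ^{n×n}, B ∈ ℝ^{n×p}, let u : ℝ → ℝ^p be a function, and let x : ℝ → ℝ^n be differentiable with ẋ(t) = A x(t) + B u(t) for all t ∈ ℝ. Set N := n(n+1)/2, x^{[2]}(t) := D_nᵀ (x(t) ⊗ x(t)), Ā := D_nᵀ (A ⊕ A) (D_n⁺)ᵀ, and Ū(t) := D_nᵀ ((B u(t)) ⊗ I_n + I_n ⊗ (B u(t))). Fix k ∈ ℕ, sizes p_0, …, p_{k+1} ∈ ℕ, matrices L̄_i ∈ ℝ^{p_i × N} for i = 0, …, k+1, permutation matrices P_i ∈ ℝ^{p_i × p_i} for i = 0, …, k+1, and matrices M_i^{(k)} ∈ ℝ^{(p_k − p_{k+1}) × p_i} for i = 0, …, k (with p_{k+1} ≤ p_k). Assume P_k L̄_k Ā = [L̄_{k+1}; Σ_{i=0}^{k} M_i^{(k)} P_i L̄_i], where [·;·] denotes vertical stacking of a p_{k+1}×N block over a (p_k − p_{k+1})×N block. Define ξ_i(t) := L̄_i x^{[2]}(t). Then, for every t, d/dt (P_k ξ_k(t)) =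 Σ_{i=0}^{k} [0_{p_{k+1}×p_i}; M_i^{(k)}] P_i ξ_i(t) + [P_{k+1}ᵀ; 0_{(p_k−p_{k+1})×p_{k+1}}] P_{k+1} ξ_{k+1}(t) + P_k L̄_k Ū(t) x(t). -/
open Matrix
open scoped Kronecker

namespace Quad

/-! The quadratic lift `x^{[2]} = D_nᵀ (x ⊗ x)` obeys the linear equation
`d/dt x^{[2]} = Ā x^{[2]} + Ū x`: the product rule gives
`ẋ ⊗ x + x ⊗ ẋ = (A ⊕ A)(x ⊗ x) + (Bu ⊗ I + I ⊗ Bu) x`, and `Ā` agrees with `D_nᵀ (A ⊕ A)` on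
symmetric vectors such as `x ⊗ x` because `(D_n⁺)ᵀ D_nᵀ = D_n D_n⁺` fixes them.
Multiplying by `P_k L̄_k` and inserting the block identity for `P_k L̄_k Ā` gives the claim, the
upper block `L̄_{k+1} x^{[2]}` being `P_{k+1}ᵀ P_{k+1} ξ_{k+1}` as permutation matrices are
orthogonal. -/

theorem SymIdx.eq_of_eq_or_swap {n : ℕ} {c c' : SymIdx n} {r : Fin n × Fin n}
    (h : r = c.1 ∨ r = c.1.swap) (h' : r = c'.1 ∨ r = c'.1.swap) : c = c' := by
  obtain ⟨⟨a, b⟩, hc⟩ := c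
  obtain ⟨⟨a', b'⟩, hc'⟩ := c'
  simp only [Prod.swap_prod_mk] at h h'
  rcases h with rfl | rfl <;> rcases h' with h' | h' <;>
    simp only [Prod.mk.injEq] at h' <;> ext <;> simp only at hc hc' ⊢ <;> omega

theorem dup_apply {n : ℕ} (r : Fin n × Fin n) (c : SymIdx n) :
    dup n r c = if r = c.1 ∨ r = c.1.swap then 1 else 0 := rfl

theorem dup_transpose_mul_dup (n : ℕ) :
    (dup n)ᵀ * dup n = diagonal fun c : SymIdx n => if c.1.1 = c.1.2 then 1 else 2 := by
  ext c c'
  simp only [mul_apply, transpose_apply, dup_apply, ite_zero_mul_ite_zero, one_mul,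
    Finset.sum_boole, diagonal_apply]
  split_ifs with hcc hdiag
  · subst hcc
    have : c.1.swap = c.1 := Prod.ext hdiag.symm hdiag
    simp [this, Finset.filter_eq']
  · subst hcc
    have : c.1 ≠ c.1.swap := fun h => hdiag (congrArg Prod.fst h)
    simp [Finset.filter_or, Finset.filter_eq', Finset.card_pair this]
  · simp only [Nat.cast_eq_zero, Finset.card_eq_zero, Finset.filter_eq_empty_iff]
    exact fun r _ ⟨h, h'⟩ => hcc (SymIdx.eq_of_eq_or_swap h h')

theorem dupPinv_mul_dup (n : ℕ) : dupPinv n * dup n = 1 := by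
  have hdet : IsUnit ((dup n)ᵀ * dup n).det := by
    rw [dup_transpose_mul_dup, det_diagonal, isUnit_iff_ne_zero, Finset.prod_ne_zero_iff]
    intro c _
    split_ifs <;> norm_num
  rw [dupPinv, Matrix.mul_assoc, nonsing_inv_mul _ hdet]

theorem dup_mulVec_of_symm {n : ℕ} {z : Fin n × Fin n → ℝ} (hz : ∀ i j, z (i, j) = z (j, i)) :
    dup n *ᵥ (fun c => z c.1) = z := by
  funext r
  have key : ∀ c₀ : SymIdx n, (r = c₀.1 ∨ r = c₀.1.swap) → z c₀.1 = z r →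
      (dup n *ᵥ fun c => z c.1) r = z r := by
    intro c₀ hr hz₀
    rw [mulVec, dotProduct, Finset.sum_eq_single c₀, dup_apply, if_pos hr, one_mul, hz₀]
    · intro c _ hc
      rw [dup_apply, if_neg fun h => hc (SymIdx.eq_of_eq_or_swap h hr), zero_mul]
    · exact fun h => (h (Finset.mem_univ c₀)).elim
  obtain ⟨i, j⟩ := r
  rcases le_total j i with h | h
  · exact key ⟨(i, j), h⟩ (Or.inl rfl) rfl
  · exact key ⟨(j, i), h⟩ (Or.inr rfl) (hz j i)

theorem dupPinv_transpose_mul_dup_transpose (n : ℕ) :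
    (dupPinv n)ᵀ * (dup n)ᵀ = dup n * dupPinv n := by
  simp [dupPinv, transpose_nonsing_inv, Matrix.mul_assoc]

theorem dupPinv_transpose_mulVec_dup_transpose_mulVec {n : ℕ} {z : Fin n × Fin n → ℝ}
    (hz : ∀ i j, z (i, j) = z (j, i)) :
    (dupPinv n)ᵀ *ᵥ ((dup n)ᵀ *ᵥ z) = z := by
  rw [mulVec_mulVec, dupPinv_transpose_mul_dup_transpose, ← dup_mulVec_of_symm hz,
    mulVec_mulVec, Matrix.mul_assoc, dupPinv_mul_dup, Matrix.mul_one]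

theorem kronAbar_mulVec_dup_transpose_mulVec {n : ℕ} (A : Matrix (Fin n) (Fin n) ℝ)
    {z : Fin n × Fin n → ℝ} (hz : ∀ i j, z (i, j) = z (j, i)) :
    kronAbar A *ᵥ ((dup n)ᵀ *ᵥ z) = (dup n)ᵀ *ᵥ (kronSum A A *ᵥ z) := by
  rw [kronAbar, ← mulVec_mulVec, dupPinv_transpose_mulVec_dup_transpose_mulVec hz,
    ← mulVec_mulVec]

theorem hasDerivAt_kronVec {a b : ℕ} {f : ℝ → Fin a → ℝ} {g : ℝ → Fin b → ℝ}
    {f' : Fin a → ℝ} {g' : Fin b → ℝ} {t : ℝ} (hf : HasDerivAt f f' t) (hg : HasDerivAt g g' t) :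
    HasDerivAt (fun s => kronVec (f s) (g s)) (kronVec f' (g t) + kronVec (f t) g') t :=
  hasDerivAt_pi.2 fun p => (hasDerivAt_pi.1 hf p.1).mul (hasDerivAt_pi.1 hg p.2)

theorem hasDerivAt_matrix_mulVec {m n : Type*} [Fintype n] (C : Matrix m n ℝ)
    {f : ℝ → n → ℝ} {f' : n → ℝ} {t : ℝ} (hf : HasDerivAt f f' t) :
    HasDerivAt (fun s => C *ᵥ f s) (C *ᵥ f') t :=
  hasDerivAt_pi.2 fun i => HasDerivAt.fun_sum fun j _ => (hasDerivAt_pi.1 hf j).const_mul (C i j)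

theorem hasDerivAt_dup_transpose_mulVec_kronVec_self {n : ℕ} (A : Matrix (Fin n) (Fin n) ℝ)
    {x : ℝ → Fin n → ℝ} {w : Fin n → ℝ} {t : ℝ} (hx : HasDerivAt x (A *ᵥ x t + w) t) :
    HasDerivAt (fun s => (dup n)ᵀ *ᵥ kronVec (x s) (x s))
      (kronAbar A *ᵥ ((dup n)ᵀ *ᵥ kronVec (x t) (x t)) +
        ((dup n)ᵀ * (vecKronId w + idKronVec w)) *ᵥ x t) t := by
  convert hasDerivAt_matrix_mulVec (dup n)ᵀ (hasDerivAt_kronVec hx hx) using 1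
  rw [kronAbar_mulVec_dup_transpose_mulVec A fun i j => mul_comm _ _, ← mulVec_mulVec,
    ← mulVec_add, add_mulVec, vecKronId_mulVec, idKronVec_mulVec, kronSum_mulVec_kronVec,
    kronVec_add_left, kronVec_add_right]
  abel_nf

theorem IsPermMatrix.transpose_mul_self {s : ℕ} {P : Matrix (Fin s) (Fin s) ℝ}
    (hP : IsPermMatrix P) : Pᵀ * P = 1 := by
  obtain ⟨σ, hσ⟩ := hP
  ext j j'
  simp only [mul_apply, transpose_apply, hσ, boole_mul, Finset.sum_ite_eq',
    Finset.mem_univ, if_true, one_apply, σ.injective.eq_iff]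

theorem fromRows_sum_mul_submatrix_mulVec {α ρ m₁ m₂ n ι : Type*} [Semiring α] [Fintype m₁]
    [DecidableEq m₁] [Fintype n] {κ : ι → Type*} [∀ i, Fintype (κ i)] (f : ρ → m₁ ⊕ m₂)
    {Q : Matrix m₁ m₁ α} (hQ : Qᵀ * Q = 1) (L : Matrix m₁ n α) (s : Finset ι)
    (M : (i : ι) → Matrix m₂ (κ i) α) (R : (i : ι) → Matrix (κ i) n α) (v : n → α) :
    (fromRows L (∑ i ∈ s, M i * R i)).submatrix f id *ᵥ v =
      ∑ i ∈ s, (fromRows 0 (M i)).submatrix f id *ᵥ (R i *ᵥ v) +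
        (fromRows Qᵀ 0).submatrix f id *ᵥ ((Q * L) *ᵥ v) := by
  funext r
  change (fromRows _ _ *ᵥ v) (f r) =
    (∑ i ∈ s, fun r => (fromRows _ _ *ᵥ _) (f r)) r + (fromRows _ _ *ᵥ _) (f r)
  rw [Finset.sum_apply]
  simp only [fromRows_mulVec]
  rcases f r with a | b
  · simp [mulVec_mulVec, ← Matrix.mul_assoc, hQ, Matrix.one_mul]
  · simp [sum_mulVec, mulVec_mulVec]

/-- one step of the iterative decomposition: if
`P_k L̄_k Ā = [L̄_{k+1}; Σ_{i≤k} M_i^{(k)} P_i L̄_i]`, then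
`d/dt (P_k ξ_k) = Σ_{i≤k} [0; M_i^{(k)}] P_i ξ_i + [P_{k+1}ᵀ; 0] P_{k+1} ξ_{k+1}
 + P_k L̄_k Ū x`. -/
theorem hasDerivAt_perm_xi {n p : ℕ}
    (A : Matrix (Fin n) (Fin n) ℝ) (B : Matrix (Fin n) (Fin p) ℝ)
    (u : ℝ → Fin p → ℝ) (x : ℝ → Fin n → ℝ)
    (hx : ∀ t, HasDerivAt x (A.mulVec (x t) + B.mulVec (u t)) t)
    (xsq : ℝ → SymIdx n → ℝ)
    (hxsq : ∀ t, xsq t = (dup n)ᵀ.mulVec (kronVec (x t) (x t)))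
    (Ubar : ℝ → Matrix (SymIdx n) (Fin n) ℝ)
    (hUbar : ∀ t, Ubar t =
      (dup n)ᵀ * (vecKronId (B.mulVec (u t)) + idKronVec (B.mulVec (u t))))
    (k : ℕ) (psz : ℕ → ℕ) (hple : psz (k + 1) ≤ psz k)
    (L : (i : ℕ) → Matrix (Fin (psz i)) (SymIdx n) ℝ)
    (P : (i : ℕ) → Matrix (Fin (psz i)) (Fin (psz i)) ℝ)
    (hP : ∀ i ≤ k + 1, IsPermMatrix (P i))
    (M : (i : ℕ) → Matrix (Fin (psz k - psz (k + 1))) (Fin (psz i)) ℝ)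
    (hrec : P k * L k * kronAbar A =
      (Matrix.fromRows (L (k + 1))
        (∑ i ∈ Finset.range (k + 1), M i * (P i * L i))).submatrix
        (stackEquiv hple).symm id)
    (ξ : (i : ℕ) → ℝ → Fin (psz i) → ℝ)
    (hξ : ∀ i t, ξ i t = (L i).mulVec (xsq t)) :
    ∀ t : ℝ, HasDerivAt (fun s => (P k).mulVec (ξ k s))
      ((∑ i ∈ Finset.range (k + 1),
          ((Matrix.fromRows (0 : Matrix (Fin (psz (k + 1))) (Fin (psz i)) ℝ)
              (M i)).submatrix (stackEquiv hple).symm id).mulVec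
            ((P i).mulVec (ξ i t))) +
        ((Matrix.fromRows ((P (k + 1))ᵀ)
            (0 : Matrix (Fin (psz k - psz (k + 1))) (Fin (psz (k + 1))) ℝ)).submatrix
            (stackEquiv hple).symm id).mulVec ((P (k + 1)).mulVec (ξ (k + 1) t)) +
        (P k * L k * Ubar t).mulVec (x t)) t := by
  intro t
  have hPξ : ∀ i s, P i *ᵥ ξ i s = (P i * L i) *ᵥ xsq s := fun i s => by
    rw [hξ, mulVec_mulVec]
  have hxsq_deriv : HasDerivAt xsq (kronAbar A *ᵥ xsq t + Ubar t *ᵥ x t) t := by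
    rw [hxsq t, hUbar t, funext hxsq]
    exact hasDerivAt_dup_transpose_mulVec_kronVec_self A (hx t)
  simp only [hPξ]
  convert hasDerivAt_matrix_mulVec (P k * L k) hxsq_deriv using 1
  rw [mulVec_add, mulVec_mulVec (x t)]
  conv_rhs => rw [mulVec_mulVec, hrec,
    fromRows_sum_mul_submatrix_mulVec _ (hP (k + 1) le_rfl).transpose_mul_self]

end Quad
end
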